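/- arXiv:2212.14472 — 2 statements merged into one kernel-verified Lean document; each statement's English description precedes it below -/
import Mathlib

section
/- Let ν ≥ 0, let N be a positive self-adjoint operator, and let A be a closed operator such that A N^{−ν/2} and A* N^{−ν/2} are bounded with ‖A N^{−ν/2}‖, ‖A* N^{−ν/2}‖ ≤ |||A|||_ν, and suppose A commutes with N. Then for every q ≥ 0 one has the operator inequality A* N^q A ≤ |||A|||_ν² N^{ν+q} on the domain of N^{(ν+q)/2}. -/
open scoped InnerProductSpace ContinuousFunctionalCalculus

section helpers

variable {E : Type*} [NormedAddCommGroup E] [InnerProductSpace ℂ E] [CompleteSpace E]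

private lemma commute_cfc'' (N : E →L[ℂ] E) (hN : IsSelfAdjoint N) (A : E →L[ℂ] E)
    (h : Commute A N) (f : ℝ → ℝ) : Commute A (cfc f N) := by
  refine cfc_cases (fun x => Commute A x) N f (by simp) fun hf hN' => ?_
  set s := spectrum ℝ N
  suffices H : ∀ g : C(s, ℝ), Commute A (cfcHom hN' g) from H _
  intro g
  induction g using ContinuousMap.induction_on with
  | const r =>
      have : (ContinuousMap.const s r) = algebraMap ℝ C(s, ℝ) r := rfl
      rw [this, AlgHomClass.commutes]
      exact (Algebra.commutes r A).symm
  | id => rw [cfcHom_id hN']; exact h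
  | star_id => rw [map_star, cfcHom_id hN', hN.star_eq]; exact h
  | add f g hf hg => rw [map_add]; exact hf.add_right hg
  | mul f g hf hg => rw [map_mul]; exact hf.mul_right hg
  | closure hcl g =>
      have hcont := cfcHom_continuous (R := ℝ) hN'
      have hclosed : IsClosed {g : C(s, ℝ) | A * cfcHom hN' g = cfcHom hN' g * A} :=
        isClosed_eq (continuous_const.mul hcont) (hcont.mul continuous_const)
      have hsub : ((polynomialFunctions s).starClosure : Set C(s, ℝ)) ⊆
          {g : C(s, ℝ) | A * cfcHom hN' g = cfcHom hN' g * A} := fun g hg => hcl g hg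
      have hdense : closure ((polynomialFunctions s).starClosure : Set C(s, ℝ)) = Set.univ := by
        rw [← StarSubalgebra.topologicalClosure_coe,
          polynomialFunctions.starClosure_topologicalClosure]
        rfl
      have : g ∈ closure ((polynomialFunctions s).starClosure : Set C(s, ℝ)) := by
        rw [hdense]; trivial
      exact closure_minimal hsub hclosed this

private lemma spec_ge_one'' (N : E →L[ℂ] E)
    (hN1 : ∀ ψ : E, ‖ψ‖ ^ 2 ≤ (⟪ψ, N ψ⟫_ℂ).re) : spectrum ℝ N ⊆ Set.Ici 1 := by
  intro μ hμ
  by_contra hlt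
  rw [Set.mem_Ici, not_le] at hlt
  have key : ∀ x : E, ‖x‖ ^ 2 * (1 - μ) ≤ ‖⟪(N - algebraMap ℝ (E →L[ℂ] E) μ) x, x⟫_ℂ‖ := by
    intro x
    have h1 : ⟪(N - algebraMap ℝ (E →L[ℂ] E) μ) x, x⟫_ℂ
        = ⟪N x, x⟫_ℂ - (μ : ℂ) * ⟪x, x⟫_ℂ := by
      rw [ContinuousLinearMap.sub_apply, inner_sub_left, Algebra.algebraMap_eq_smul_one,
        ContinuousLinearMap.smul_apply, ContinuousLinearMap.one_apply,
        RCLike.real_smul_eq_coe_smul (K := ℂ), inner_smul_left, RCLike.conj_ofReal]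
      rfl
    have h2 : ‖x‖ ^ 2 * (1 - μ) ≤ (⟪(N - algebraMap ℝ (E →L[ℂ] E) μ) x, x⟫_ℂ).re := by
      rw [h1]
      have := hN1 x
      have hre : (⟪N x, x⟫_ℂ).re = (⟪x, N x⟫_ℂ).re := by
        rw [← inner_conj_symm (N x) x, Complex.conj_re]
      have hxx : (⟪x, x⟫_ℂ) = (‖x‖ ^ 2 : ℝ) := by
        rw [inner_self_eq_norm_sq_to_K]; norm_cast
      simp only [Complex.sub_re, hre, hxx]
      rw [Complex.re_ofReal_mul]
      rw [Complex.ofReal_re]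
      nlinarith [sq_nonneg ‖x‖]
    exact h2.trans (Complex.re_le_norm _)
  have hc : (0 : ℝ) < 1 - μ := by linarith
  have hu : IsUnit (N - algebraMap ℝ (E →L[ℂ] E) μ) :=
    ContinuousLinearMap.isUnit_of_forall_le_norm_inner_map _ (c := ⟨1 - μ, hc.le⟩) hc key
  have hu2 : IsUnit (algebraMap ℝ (E →L[ℂ] E) μ - N) := by
    rw [← neg_sub]; exact hu.neg
  exact spectrum.notMem_iff.mpr hu2 hμ

end helpers

/-- Relative bound for `N^{ν/2}`-bounded operators: if `N ≥ 1` is positive self-adjoint,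
`A` commutes with `N`, and `‖A N^{−ν/2}‖, ‖A* N^{−ν/2}‖ ≤ c` (so `|||A|||_ν ≤ c`), then
for every `q ≥ 0` one has the quadratic-form inequality `A* N^q A ≤ c² N^{ν+q}`.
(Powers of `N` are taken via the continuous functional calculus.) -/
theorem relative_bound_Npow
    {E : Type*} [NormedAddCommGroup E] [InnerProductSpace ℂ E] [CompleteSpace E]
    (N : E →L[ℂ] E) (hNsa : IsSelfAdjoint N)
    (hN1 : ∀ ψ : E, ‖ψ‖ ^ 2 ≤ (⟪ψ, N ψ⟫_ℂ).re)
    (ν : ℝ) (hν : 0 ≤ ν) (c : ℝ) (hc : 0 ≤ c)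
    (A : E →L[ℂ] E) (hcomm : Commute A N)
    (hA : ‖A * cfc (fun x : ℝ => x ^ (-(ν / 2))) N‖ ≤ c)
    (hAstar : ‖ContinuousLinearMap.adjoint A * cfc (fun x : ℝ => x ^ (-(ν / 2))) N‖ ≤ c)
    (q : ℝ) (hq : 0 ≤ q) (ψ : E) :
    (⟪A ψ, cfc (fun x : ℝ => x ^ q) N (A ψ)⟫_ℂ).re ≤
      c ^ 2 * (⟪ψ, cfc (fun x : ℝ => x ^ (ν + q)) N ψ⟫_ℂ).re := by
  have hS : spectrum ℝ N ⊆ Set.Ici 1 := spec_ge_one'' N hN1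
  have hpos : ∀ x ∈ spectrum ℝ N, (0 : ℝ) < x := fun x hx => lt_of_lt_of_le one_pos (hS hx)
  have hcont : ∀ r : ℝ, ContinuousOn (fun x : ℝ => x ^ r) (spectrum ℝ N) := fun r x hx =>
    (Real.continuousAt_rpow_const x r (Or.inl (hpos x hx).ne')).continuousWithinAt
  have hmul : ∀ r s : ℝ, cfc (fun x : ℝ => x ^ r) N * cfc (fun x : ℝ => x ^ s) N
      = cfc (fun x : ℝ => x ^ (r + s)) N := by
    intro r s
    rw [← cfc_mul _ _ N (hcont r) (hcont s)]
    exact cfc_congr fun x hx => (Real.rpow_add (hpos x hx) r s).symm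
  -- self-adjointness of cfc's
  have hsa : ∀ r : ℝ, IsSelfAdjoint (cfc (fun x : ℝ => x ^ r) N) := fun r => cfc_predicate _ N
  set T := cfc (fun x : ℝ => x ^ (q / 2)) N with hT
  set M := cfc (fun x : ℝ => x ^ ((ν + q) / 2)) N with hM
  set B := A * cfc (fun x : ℝ => x ^ (-(ν / 2))) N with hB
  -- LHS = ‖T (A ψ)‖ ^ 2
  have hTT : cfc (fun x : ℝ => x ^ q) N = T * T := by
    rw [hT, hmul]; norm_num
  have hMM : cfc (fun x : ℝ => x ^ (ν + q)) N = M * M := by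
    rw [hM, hmul]; norm_num
  have hadj : ∀ (S : E →L[ℂ] E), IsSelfAdjoint S → ∀ (φ ξ : E),
      ⟪φ, S ξ⟫_ℂ = ⟪S φ, ξ⟫_ℂ := by
    intro S hSsa φ ξ
    rw [← ContinuousLinearMap.adjoint_inner_left]
    congr 1
    rw [← ContinuousLinearMap.star_eq_adjoint, hSsa.star_eq]
  have hLHS : (⟪A ψ, cfc (fun x : ℝ => x ^ q) N (A ψ)⟫_ℂ).re = ‖T (A ψ)‖ ^ 2 := by
    rw [hTT, ContinuousLinearMap.mul_apply, hadj T (hsa _) (A ψ) (T (A ψ)),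
      inner_self_eq_norm_sq_to_K]
    norm_cast
  have hRHS : (⟪ψ, cfc (fun x : ℝ => x ^ (ν + q)) N ψ⟫_ℂ).re = ‖M ψ‖ ^ 2 := by
    rw [hMM, ContinuousLinearMap.mul_apply, hadj M (hsa _) ψ (M ψ),
      inner_self_eq_norm_sq_to_K]
    norm_cast
  have hComm : Commute A T := commute_cfc'' N hNsa A hcomm _
  have hone : cfc (fun x : ℝ => x ^ (-(ν / 2))) N * cfc (fun x : ℝ => x ^ (ν / 2)) N = 1 := by
    rw [hmul]
    rw [show -(ν / 2) + ν / 2 = (0 : ℝ) by ring]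
    rw [show (fun x : ℝ => x ^ (0 : ℝ)) = fun _ : ℝ => (1 : ℝ) by
      funext x; exact Real.rpow_zero x]
    exact cfc_const_one ℝ N
  have hνq : cfc (fun x : ℝ => x ^ (ν / 2)) N * T = M := by
    rw [hT, hM, hmul, show ν / 2 + q / 2 = (ν + q) / 2 by ring]
  have hAT : A * T = B * M := by
    symm
    rw [hB, ← hνq, mul_assoc, ← mul_assoc (cfc (fun x : ℝ => x ^ (-(ν / 2))) N), hone, one_mul]
  have hkey : T (A ψ) = B (M ψ) := by
    have h1 : T (A ψ) = (A * T) ψ := by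
      rw [← ContinuousLinearMap.mul_apply, hComm.eq]
    rw [h1, hAT, ContinuousLinearMap.mul_apply]
  have hnorm : ‖T (A ψ)‖ ≤ c * ‖M ψ‖ := by
    rw [hkey]
    calc ‖B (M ψ)‖ ≤ ‖B‖ * ‖M ψ‖ := B.le_opNorm _
      _ ≤ c * ‖M ψ‖ := by
          exact mul_le_mul_of_nonneg_right hA (norm_nonneg _)
  rw [hLHS, hRHS]
  calc ‖T (A ψ)‖ ^ 2 ≤ (c * ‖M ψ‖) ^ 2 := by
        apply pow_le_pow_left₀ (norm_nonneg _) hnorm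
    _ = c ^ 2 * ‖M ψ‖ ^ 2 := by ring
end

section
/- Let N, B be commuting positive self-adjoint operators with B bounded, and let A be an operator commuting with both N and B such that A* N^q A ≤ M² N^{ν+q} for all q ≥ 0 (in the quadratic-form sense). Then for all p, q ≥ 0: A* N^{p/2} B^q N^{p/2} A ≤ M² N^{(ν+p)/2} B^q N^{(ν+p)/2} on the domain of B^{q/2} N^{(ν+p)/2}. -/
open scoped InnerProductSpace

section Aux

variable {E : Type*} [NormedAddCommGroup E] [InnerProductSpace ℂ E] [CompleteSpace E]

/-- Anything commuting with a selfadjoint operator commutes with its continuous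
functional calculus. -/
lemma commute_cfc_aux {X N : E →L[ℂ] E} (hN : IsSelfAdjoint N) (h : Commute X N)
    (f : ℝ → ℝ) : Commute X (cfc f N) := by
  by_cases hf : ContinuousOn f (spectrum ℝ N)
  · rw [cfc_apply f N hN hf]
    suffices H : ∀ g : C(spectrum ℝ N, ℝ), Commute X (cfcHom hN g) from H _
    intro g
    let S : Subalgebra ℝ C(spectrum ℝ N, ℝ) :=
    { carrier := {g | Commute X (cfcHom hN g)}
      mul_mem' := fun {p q} hp hq => by
        have : Commute X (cfcHom hN p * cfcHom hN q) := hp.mul_right hq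
        simpa only [Set.mem_setOf_eq, map_mul] using this
      one_mem' := by
        simp only [Set.mem_setOf_eq, map_one]
        exact Commute.one_right X
      add_mem' := fun {p q} hp hq => by
        have : Commute X (cfcHom hN p + cfcHom hN q) := hp.add_right hq
        simpa only [Set.mem_setOf_eq, map_add] using this
      zero_mem' := by
        simp only [Set.mem_setOf_eq, map_zero]
        exact Commute.zero_right X
      algebraMap_mem' := fun r => by
        simp only [Set.mem_setOf_eq, AlgHomClass.commutes]
        exact (Algebra.commutes r X).symm }
    have hX : (Polynomial.toContinuousMapOnAlgHom (spectrum ℝ N) Polynomial.X) ∈ S := by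
      show Commute X (cfcHom hN _)
      have heq : (Polynomial.toContinuousMapOnAlgHom (spectrum ℝ N) Polynomial.X) =
          ContinuousMap.restrict (spectrum ℝ N) (ContinuousMap.id ℝ) := by
        ext x; simp
      rw [heq, cfcHom_id hN]
      exact h
    have hpoly : polynomialFunctions (spectrum ℝ N) ≤ S := by
      rw [polynomialFunctions.eq_adjoin_X]
      exact Algebra.adjoin_le (by simpa using hX)
    have hclosed : IsClosed (S : Set C(spectrum ℝ N, ℝ)) := by
      have hcont : Continuous (fun g : C(spectrum ℝ N, ℝ) =>
          X * cfcHom hN g - cfcHom hN g * X) := by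
        have hc := (cfcHom_isClosedEmbedding hN (R := ℝ)).continuous
        exact (continuous_const.mul hc).sub (hc.mul continuous_const)
      have : (S : Set C(spectrum ℝ N, ℝ)) =
          (fun g : C(spectrum ℝ N, ℝ) => X * cfcHom hN g - cfcHom hN g * X) ⁻¹' {0} := by
        ext g
        simp only [Set.mem_preimage, Set.mem_singleton_iff, sub_eq_zero]
        rfl
      rw [this]
      exact isClosed_singleton.preimage hcont
    have htop : (⊤ : Subalgebra ℝ C(spectrum ℝ N, ℝ)) ≤ S := by
      rw [← ContinuousMap.subalgebra_topologicalClosure_eq_top_of_separatesPoints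
        (polynomialFunctions (spectrum ℝ N)) (polynomialFunctions_separatesPoints _)]
      exact Subalgebra.topologicalClosure_minimal hpoly hclosed
    exact htop (Algebra.mem_top) 
  · rw [cfc_apply_of_not_continuousOn N hf]
    exact Commute.zero_right X
end Aux

section Main

variable {E : Type*} [NormedAddCommGroup E] [InnerProductSpace ℂ E] [CompleteSpace E]

lemma cfc_rpow_half_sq {T : E →L[ℂ] E} (hT : IsSelfAdjoint T)
    (hspec : ∀ x ∈ spectrum ℝ T, (0:ℝ) ≤ x) {r : ℝ} (hr : 0 ≤ r) :
    cfc (fun x : ℝ => x ^ r) T =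
      cfc (fun x : ℝ => x ^ (r/2)) T * cfc (fun x : ℝ => x ^ (r/2)) T := by
  rw [← cfc_mul _ _ T (Real.continuous_rpow_const (by linarith)).continuousOn
    (Real.continuous_rpow_const (by linarith)).continuousOn]
  refine cfc_congr fun x hx => ?_
  rw [← Real.rpow_add_of_nonneg (hspec x hx) (by linarith) (by linarith), add_halves]

lemma inner_cfc_rpow_eq_sq_norm {T : E →L[ℂ] E} (hT : IsSelfAdjoint T)
    (hspec : ∀ x ∈ spectrum ℝ T, (0:ℝ) ≤ x) {r : ℝ} (hr : 0 ≤ r) (x : E) :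
    (⟪x, cfc (fun x : ℝ => x ^ r) T x⟫_ℂ).re =
      ‖cfc (fun x : ℝ => x ^ (r/2)) T x‖ ^ 2 := by
  rw [cfc_rpow_half_sq hT hspec hr, ContinuousLinearMap.mul_apply]
  have hsa : IsSelfAdjoint (cfc (fun x : ℝ => x ^ (r/2)) T) := cfc_predicate _ T
  rw [show ⟪x, (cfc (fun x : ℝ => x ^ (r/2)) T) ((cfc (fun x : ℝ => x ^ (r/2)) T) x)⟫_ℂ
      = ⟪(cfc (fun x : ℝ => x ^ (r/2)) T) x, (cfc (fun x : ℝ => x ^ (r/2)) T) x⟫_ℂ from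
    (hsa.isSymmetric x ((cfc (fun x : ℝ => x ^ (r/2)) T) x)).symm]
  rw [inner_self_eq_norm_sq_to_K]
  norm_cast

lemma spectrum_nonneg_of_inner {T : E →L[ℂ] E} (hT : IsSelfAdjoint T)
    (hpos : ∀ ψ : E, 0 ≤ (⟪ψ, T ψ⟫_ℂ).re) : ∀ x ∈ spectrum ℝ T, (0:ℝ) ≤ x := by
  have hP : T.IsPositive := by
    refine ⟨hT.isSymmetric, fun x => ?_⟩
    rw [ContinuousLinearMap.reApplyInnerSelf_apply, inner_re_symm]
    exact hpos x
  exact fun x hx => SpectrumRestricts.nnreal_iff.mp hP.spectrumRestricts x hx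

end Main

/-- Estimate (A5.34'): if `N`, `B` are commuting positive self-adjoint (bounded)
operators and `A` commutes with both and satisfies `A* N^q A ≤ M² N^{ν+q}` for all
`q ≥ 0` in the quadratic-form sense, then for all `p, q ≥ 0`:
`A* N^{p/2} B^q N^{p/2} A ≤ M² N^{(ν+p)/2} B^q N^{(ν+p)/2}`. -/
theorem relative_bound_Npow_Bpow
    {E : Type*} [NormedAddCommGroup E] [InnerProductSpace ℂ E] [CompleteSpace E]
    (N B : E →L[ℂ] E) (hNsa : IsSelfAdjoint N) (hBsa : IsSelfAdjoint B)
    (hNpos : ∀ ψ : E, 0 ≤ (⟪ψ, N ψ⟫_ℂ).re) (hBpos : ∀ ψ : E, 0 ≤ (⟪ψ, B ψ⟫_ℂ).re)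
    (hNB : Commute N B)
    (ν : ℝ) (hν : 0 ≤ ν) (M : ℝ) (hM : 0 ≤ M)
    (A : E →L[ℂ] E) (hAN : Commute A N) (hAB : Commute A B)
    (hA : ∀ q : ℝ, 0 ≤ q → ∀ ψ : E,
      (⟪A ψ, cfc (fun x : ℝ => x ^ q) N (A ψ)⟫_ℂ).re ≤
        M ^ 2 * (⟪ψ, cfc (fun x : ℝ => x ^ (ν + q)) N ψ⟫_ℂ).re) :
    ∀ p q : ℝ, 0 ≤ p → 0 ≤ q → ∀ ψ : E,
      (⟪cfc (fun x : ℝ => x ^ (p / 2)) N (A ψ),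
          cfc (fun x : ℝ => x ^ q) B (cfc (fun x : ℝ => x ^ (p / 2)) N (A ψ))⟫_ℂ).re ≤
        M ^ 2 * (⟪cfc (fun x : ℝ => x ^ ((ν + p) / 2)) N ψ,
          cfc (fun x : ℝ => x ^ q) B (cfc (fun x : ℝ => x ^ ((ν + p) / 2)) N ψ)⟫_ℂ).re := by
  intro p q hp hq ψ
  have hspecB := spectrum_nonneg_of_inner hBsa hBpos
  have hspecN := spectrum_nonneg_of_inner hNsa hNpos
  set Nh := cfc (fun x : ℝ => x ^ (p/2)) N with hNh
  set Nf := cfc (fun x : ℝ => x ^ ((ν+p)/2)) N with hNf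
  set Bh := cfc (fun x : ℝ => x ^ (q/2)) B with hBhdef
  have hNB' : Commute Nh B := (commute_cfc_aux hNsa hNB.symm _).symm
  have hNfB : Commute Nf B := (commute_cfc_aux hNsa hNB.symm _).symm
  have hNhBh : Commute Nh Bh := commute_cfc_aux hBsa hNB' _
  have hNfBh : Commute Nf Bh := commute_cfc_aux hBsa hNfB _
  have hABh : Commute A Bh := commute_cfc_aux hBsa hAB _
  rw [inner_cfc_rpow_eq_sq_norm hBsa hspecB hq (Nh (A ψ)),
      inner_cfc_rpow_eq_sq_norm hBsa hspecB hq (Nf ψ), ← hBhdef]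
  have h1 : Bh (Nh (A ψ)) = Nh (A (Bh ψ)) := by
    have hop : Bh * (Nh * A) = Nh * (A * Bh) := by
      rw [← mul_assoc, ← hNhBh.eq, mul_assoc, hABh.eq]
    calc Bh (Nh (A ψ)) = (Bh * (Nh * A)) ψ := by
          simp [ContinuousLinearMap.mul_apply]
      _ = (Nh * (A * Bh)) ψ := by rw [hop]
      _ = Nh (A (Bh ψ)) := by simp [ContinuousLinearMap.mul_apply]
  have h2 : Bh (Nf ψ) = Nf (Bh ψ) := by
    calc Bh (Nf ψ) = (Bh * Nf) ψ := rfl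
      _ = (Nf * Bh) ψ := by rw [← hNfBh.eq]
      _ = Nf (Bh ψ) := rfl
  rw [h1, h2]
  have key := hA p hp (Bh ψ)
  rw [inner_cfc_rpow_eq_sq_norm hNsa hspecN hp (A (Bh ψ)),
      inner_cfc_rpow_eq_sq_norm hNsa hspecN (add_nonneg hν hp) (Bh ψ),
      ← hNh, ← hNf] at key
  exact key
end
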